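/- arXiv:1712.02208 — 4 statements merged into one kernel-verified Lean document; each statement's English description precedes it below -/
import Mathlib

section
/- The action of the nilHecke algebra NH_n on ℤ[x_1,...,x_n] is faithful: if a ℤ-linear combination of the operators of the form (multiplication by a monomial) ∘ ∂_w, for w ranging over reduced words in S_n, acts as zero on ℤ[x_1,...,x_n], then all coefficients vanish. -/
open MvPolynomial

noncomputable def Xmul (n j : ℕ) (hj : j < n) :
    Module.End ℤ (MvPolynomial (Fin n) ℤ) :=
  LinearMap.mulLeft ℤ (X ⟨j, hj⟩)

noncomputable def swapVar (n i : ℕ) (hi : i + 1 < n) :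
    MvPolynomial (Fin n) ℤ →ₐ[ℤ] MvPolynomial (Fin n) ℤ :=
  rename (Equiv.swap ⟨i, Nat.lt_of_succ_lt hi⟩ ⟨i + 1, hi⟩)

def IsDD (n i : ℕ) (hi : i + 1 < n)
    (D : Module.End ℤ (MvPolynomial (Fin n) ℤ)) : Prop :=
  ∀ f : MvPolynomial (Fin n) ℤ,
    (X ⟨i, Nat.lt_of_succ_lt hi⟩ - X ⟨i + 1, hi⟩) * D f = f - swapVar n i hi f

noncomputable def sOp (n i : ℕ) (hi : i + 1 < n)
    (D : Module.End ℤ (MvPolynomial (Fin n) ℤ)) :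
    Module.End ℤ (MvPolynomial (Fin n) ℤ) :=
  D * Xmul n i (Nat.lt_of_succ_lt hi) - Xmul n i (Nat.lt_of_succ_lt hi) * D

noncomputable def Dword (n : ℕ)
    (D : ∀ i, i + 1 < n → Module.End ℤ (MvPolynomial (Fin n) ℤ))
    (l : List ℕ) : Module.End ℤ (MvPolynomial (Fin n) ℤ) :=
  (l.map fun i => if h : i + 1 < n then D i h else 1).prod

def wordPerm (n : ℕ) (l : List ℕ) : Equiv.Perm (Fin n) :=
  (l.map fun i =>
    if h : i + 1 < n then Equiv.swap ⟨i, Nat.lt_of_succ_lt h⟩ ⟨i + 1, h⟩ else Equiv.refl (Fin n)).prod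

/-- `l` is a reduced word for the permutation `w` in terms of adjacent transpositions. -/
def IsReducedWord (n : ℕ) (l : List ℕ) (w : Equiv.Perm (Fin n)) : Prop :=
  (∀ i ∈ l, i + 1 < n) ∧ wordPerm n l = w ∧
    ∀ l' : List ℕ, (∀ i ∈ l', i + 1 < n) → wordPerm n l' = w → l.length ≤ l'.length

/-!
Over the fraction field `K` of `ℤ[x₁, …, xₙ]` each divided difference is
`∂ᵢ = (xᵢ - xᵢ₊₁)⁻¹ (1 - sᵢ)`, so a word `∂_l` expands as `∑ᵥ a_l(v) · v` with coefficients
`a_l(v) ∈ K` that vanish unless `v` is the product of a subword of `l`; for a reduced word of `w`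
the coefficient `a_l(w)` is nonzero, since no subword of `l` shorter than `l` multiplies to `w`.
Grouping the combination as `∑_w P_w ∂_w` with `P_w ∈ ℤ[x]`, Dedekind's independence of the
characters `f ↦ v(f)` turns its vanishing into the system `∑_u P_u a_u(w) = 0`, which is
triangular for the length order; hence every `P_w` is zero, i.e. all coefficients vanish.
-/

open Equiv

namespace NilHecke

theorem eq_zero_of_sum_mul_triangular {ι K : Type*} [Fintype ι] [Semiring K] [NoZeroDivisors K]
    (len : ι → ℕ) (A : ι → ι → K) (hdiag : ∀ w, A w w ≠ 0)
    (htri : ∀ u w, u ≠ w → len u ≤ len w → A u w = 0) (x : ι → K)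
    (hx : ∀ w, ∑ u, x u * A u w = 0) : x = 0 := by
  classical
  by_contra hne
  obtain ⟨w, hw, hmax⟩ := Finset.exists_max_image {u | x u ≠ 0} len
    (Function.ne_iff.mp hne |>.imp fun u hu => Finset.mem_filter.mpr ⟨Finset.mem_univ u, hu⟩)
  have hw : x w ≠ 0 := (Finset.mem_filter.mp hw).2
  refine mul_ne_zero hw (hdiag w) ?_
  rw [← hx w, Finset.sum_eq_single w (fun u _ huw => ?_) (by simp)]
  by_cases hu : x u = 0
  · rw [hu, zero_mul]
  · rw [htri u w huw (hmax u (Finset.mem_filter.mpr ⟨Finset.mem_univ u, hu⟩)), mul_zero]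

section CoeffPoly

variable {σ ι R : Type*} [CommSemiring R] [DecidableEq ι]

noncomputable def coeffPoly (c : ((σ →₀ ℕ) × ι) →₀ R) (v : ι) : MvPolynomial σ R :=
  c.sum fun p a => if p.2 = v then monomial p.1 a else 0

theorem coeff_coeffPoly (c : ((σ →₀ ℕ) × ι) →₀ R) (m : σ →₀ ℕ) (v : ι) :
    coeff m (coeffPoly c v) = c (m, v) := by
  classical
  rw [coeffPoly, Finsupp.sum, coeff_sum, Finset.sum_eq_single (m, v)]
  · simp [coeff_monomial]
  · rintro ⟨m', v'⟩ - hne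
    simp only [apply_ite (coeff m), coeff_monomial, coeff_zero]
    split_ifs with hv hm
    · exact absurd (by rw [hm, hv]) hne
    all_goals rfl
  · simp +contextual

theorem sum_coeffPoly_mul [Fintype ι] (c : ((σ →₀ ℕ) × ι) →₀ R) (g : ι → MvPolynomial σ R) :
    ∑ v, coeffPoly c v * g v = c.sum fun p a => monomial p.1 a * g p.2 := by
  simp only [coeffPoly, Finsupp.sum, Finset.sum_mul, ite_mul, zero_mul]
  rw [Finset.sum_comm]
  simp

end CoeffPoly

section PermAction

variable {σ R : Type*}

variable (σ R) in
noncomputable def renameHom [CommSemiring R] :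
    Perm σ →* (MvPolynomial σ R ≃+* MvPolynomial σ R) where
  toFun v := (renameEquiv R v).toRingEquiv
  map_one' := by ext; simp
  map_mul' u v := by ext; simp [rename_rename]

variable [CommRing R]

variable (σ R) in
noncomputable def permAct :
    Perm σ →* (FractionRing (MvPolynomial σ R) ≃+* FractionRing (MvPolynomial σ R)) :=
  (IsFractionRing.ringEquivOfRingEquivHom _ _).comp (renameHom σ R)

theorem permAct_algebraMap (v : Perm σ) (f : MvPolynomial σ R) :
    permAct σ R v (algebraMap _ _ f) = algebraMap _ _ (rename v f) :=
  IsFractionRing.ringEquivOfRingEquiv_algebraMap _ _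

theorem permAct_permAct (u v : Perm σ) (x : FractionRing (MvPolynomial σ R)) :
    permAct σ R u (permAct σ R v x) = permAct σ R (u * v) x := by
  rw [map_mul, RingAut.mul_apply]

theorem linearIndependent_permAct [IsDomain R] :
    LinearIndependent (FractionRing (MvPolynomial σ R))
      fun (v : Perm σ) (f : MvPolynomial σ R) => permAct σ R v (algebraMap _ _ f) := by
  let χ : Perm σ → (MvPolynomial σ R →* FractionRing (MvPolynomial σ R)) :=
    fun v => ((permAct σ R v).toRingHom.comp (algebraMap _ _)).toMonoidHom
  have hχ : χ.Injective := fun u v huv => Equiv.ext fun j => by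
    have := DFunLike.congr_fun huv (X j)
    simpa [χ, permAct_algebraMap, X_injective.eq_iff, (IsFractionRing.injective _ _).eq_iff]
      using this
  exact (linearIndependent_monoidHom _ _).comp χ hχ

end PermAction

abbrev FracField (n : ℕ) := FractionRing (MvPolynomial (Fin n) ℤ)

variable {n : ℕ}

def adjSwap (n i : ℕ) (hi : i + 1 < n) : Perm (Fin n) :=
  swap ⟨i, Nat.lt_of_succ_lt hi⟩ ⟨i + 1, hi⟩

theorem adjSwap_mul_adjSwap (i : ℕ) (hi : i + 1 < n) : adjSwap n i hi * adjSwap n i hi = 1 :=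
  swap_mul_self _ _

theorem wordPerm_cons (i : ℕ) (l : List ℕ) :
    wordPerm n (i :: l) = (if h : i + 1 < n then adjSwap n i h else 1) * wordPerm n l := rfl

theorem Dword_nil (D : ∀ i, i + 1 < n → Module.End ℤ (MvPolynomial (Fin n) ℤ)) :
    Dword n D [] = 1 := rfl

theorem Dword_cons (D : ∀ i, i + 1 < n → Module.End ℤ (MvPolynomial (Fin n) ℤ))
    (i : ℕ) (l : List ℕ) :
    Dword n D (i :: l) = (if h : i + 1 < n then D i h else 1) * Dword n D l := rfl

noncomputable def rootInv (n i : ℕ) (hi : i + 1 < n) : FracField n :=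
  (algebraMap _ _ (X ⟨i, Nat.lt_of_succ_lt hi⟩ - X ⟨i + 1, hi⟩ : MvPolynomial (Fin n) ℤ))⁻¹

theorem rootInv_ne_zero (i : ℕ) (hi : i + 1 < n) : rootInv n i hi ≠ 0 := by
  simp [rootInv, sub_eq_zero, X_injective.eq_iff]

theorem algebraMap_of_isDD {i : ℕ} {hi : i + 1 < n} {D : Module.End ℤ (MvPolynomial (Fin n) ℤ)}
    (hD : IsDD n i hi D) (f : MvPolynomial (Fin n) ℤ) :
    algebraMap _ (FracField n) (D f) = rootInv n i hi *
      (algebraMap _ _ f - permAct _ _ (adjSwap n i hi) (algebraMap _ _ f)) := by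
  have h : (X _ - X _) * D f = f - rename (adjSwap n i hi) f := hD f
  rw [permAct_algebraMap, ← map_sub, ← h, map_mul, rootInv, inv_mul_cancel_left₀]
  simp [sub_eq_zero, X_injective.eq_iff]

/-- `ddCoeff n l v` is the coefficient of the substitution `v` in the expansion of `∂_l` over
`FracField n` (see `algebraMap_Dword`). -/
noncomputable def ddCoeff (n : ℕ) : List ℕ → Perm (Fin n) → FracField n
  | [] => Pi.single 1 1
  | i :: l =>
    if hi : i + 1 < n then fun v => rootInv n i hi *
      (ddCoeff n l v - permAct _ _ (adjSwap n i hi) (ddCoeff n l (adjSwap n i hi * v)))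
    else ddCoeff n l

theorem algebraMap_Dword {D : ∀ i, i + 1 < n → Module.End ℤ (MvPolynomial (Fin n) ℤ)}
    (hD : ∀ i hi, IsDD n i hi (D i hi)) (l : List ℕ) (f : MvPolynomial (Fin n) ℤ) :
    algebraMap _ (FracField n) (Dword n D l f) =
      ∑ v, ddCoeff n l v * permAct _ _ v (algebraMap _ _ f) := by
  induction l with
  | nil => simp [Dword_nil, ddCoeff, Pi.single_apply, ite_mul]
  | cons i l ih =>
    rw [Dword_cons, Module.End.mul_apply]
    by_cases hi : i + 1 < n
    · set s := adjSwap n i hi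
      have hs : ∑ v, permAct _ _ s (ddCoeff n l v * permAct _ _ v (algebraMap _ _ f)) =
          ∑ v, permAct _ _ s (ddCoeff n l (s * v)) * permAct _ _ v (algebraMap _ _ f) :=
        Fintype.sum_equiv (Equiv.mulLeft s) _ _ fun v => by
          simp only [map_mul (permAct _ _ s), permAct_permAct, coe_mulLeft, ← mul_assoc, s,
            adjSwap_mul_adjSwap, one_mul]
      rw [dif_pos hi, algebraMap_of_isDD (hD i hi), ih, map_sum, hs, ← Finset.sum_sub_distrib,
        Finset.mul_sum]
      simp only [ddCoeff, dif_pos hi]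
      exact Finset.sum_congr rfl fun v _ => by ring
    · simp [dif_neg hi, ddCoeff, ih]

theorem exists_sublist_wordPerm_eq_of_ddCoeff_ne_zero {l : List ℕ} {v : Perm (Fin n)}
    (h : ddCoeff n l v ≠ 0) : ∃ l', l'.Sublist l ∧ wordPerm n l' = v := by
  induction l generalizing v with
  | nil =>
    refine ⟨[], List.Sublist.refl _, ?_⟩
    by_contra hv
    exact h (Pi.single_eq_of_ne' hv _)
  | cons i l ih =>
    by_cases hi : i + 1 < n
    · simp only [ddCoeff, dif_pos hi] at h
      by_cases hv : ddCoeff n l v = 0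
      · obtain ⟨l', hl', hw⟩ := ih (v := adjSwap n i hi * v) fun h' => by simp [hv, h'] at h
        refine ⟨i :: l', hl'.cons_cons i, ?_⟩
        rw [wordPerm_cons, dif_pos hi, hw, ← mul_assoc, adjSwap_mul_adjSwap, one_mul]
      · obtain ⟨l', hl', hw⟩ := ih hv
        exact ⟨l', hl'.cons i, hw⟩
    · simp only [ddCoeff, dif_neg hi] at h
      obtain ⟨l', hl', hw⟩ := ih h
      exact ⟨l', hl'.cons i, hw⟩

theorem _root_.IsReducedWord.exists_sublist_of_ddCoeff_ne_zero {l l' : List ℕ}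
    {w : Perm (Fin n)} (hl : ∀ i ∈ l, i + 1 < n) (hw : IsReducedWord n l' w)
    (h : ddCoeff n l w ≠ 0) : ∃ m, m.Sublist l ∧ wordPerm n m = w ∧ l'.length ≤ m.length := by
  obtain ⟨m, hm, hmw⟩ := exists_sublist_wordPerm_eq_of_ddCoeff_ne_zero h
  exact ⟨m, hm, hmw, hw.2.2 m (fun i hi => hl i (hm.subset hi)) hmw⟩

theorem _root_.IsReducedWord.of_cons {i : ℕ} {l : List ℕ} {w : Perm (Fin n)}
    (h : IsReducedWord n (i :: l) w) : IsReducedWord n l (wordPerm n l) := by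
  obtain ⟨hrange, rfl, hmin⟩ := h
  refine ⟨fun j hj => hrange j (List.mem_cons_of_mem i hj), rfl, fun l' hl' hw => ?_⟩
  have := hmin (i :: l') (List.forall_mem_cons.mpr ⟨hrange i List.mem_cons_self, hl'⟩)
    (by rw [wordPerm_cons, wordPerm_cons, hw])
  simpa using this

theorem ddCoeff_ne_zero_of_isReducedWord {l : List ℕ} {w : Perm (Fin n)}
    (h : IsReducedWord n l w) : ddCoeff n l w ≠ 0 := by
  induction l generalizing w with
  | nil =>
    obtain ⟨-, rfl, -⟩ := h
    simp [ddCoeff, show wordPerm n [] = 1 from rfl]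
  | cons i l ih =>
    have hi : i + 1 < n := h.1 i List.mem_cons_self
    have hw : w = adjSwap n i hi * wordPerm n l := by rw [← h.2.1, wordPerm_cons, dif_pos hi]
    have hlead : ddCoeff n l w = 0 := by
      by_contra hne
      obtain ⟨m, hm, -, hlen⟩ := h.exists_sublist_of_ddCoeff_ne_zero h.of_cons.1 hne
      have := hm.length_le
      simp only [List.length_cons] at hlen
      omega
    simp only [ddCoeff, dif_pos hi, hlead, zero_sub]
    rw [hw, ← mul_assoc, adjSwap_mul_adjSwap, one_mul]
    exact mul_ne_zero (rootInv_ne_zero i hi)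
      (neg_ne_zero.mpr ((map_ne_zero _).mpr (ih h.of_cons)))

theorem ddCoeff_eq_zero_of_length_le {l l' : List ℕ} {u w : Perm (Fin n)}
    (hl : IsReducedWord n l u) (hl' : IsReducedWord n l' w) (huw : u ≠ w)
    (hlen : l.length ≤ l'.length) : ddCoeff n l w = 0 := by
  by_contra hne
  obtain ⟨m, hm, hmw, hlen'⟩ := hl'.exists_sublist_of_ddCoeff_ne_zero hl.1 hne
  rw [hm.eq_of_length_le (hlen.trans hlen'), hl.2.1] at hmw
  exact huw hmw

theorem sum_mul_ddCoeff_eq_zero {ι : Type*} [Fintype ι]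
    {D : ∀ i, i + 1 < n → Module.End ℤ (MvPolynomial (Fin n) ℤ)}
    (hD : ∀ i hi, IsDD n i hi (D i hi)) (L : ι → List ℕ) (P : ι → MvPolynomial (Fin n) ℤ)
    (h : ∀ f, ∑ j, P j * Dword n D (L j) f = 0) (w : Perm (Fin n)) :
    ∑ j, algebraMap _ (FracField n) (P j) * ddCoeff n (L j) w = 0 := by
  refine Fintype.linearIndependent_iff.mp linearIndependent_permAct
    (fun w => ∑ j, algebraMap _ (FracField n) (P j) * ddCoeff n (L j) w) (funext fun f => ?_) w
  have := congrArg (algebraMap _ (FracField n)) (h f)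
  simp only [map_sum, map_mul, algebraMap_Dword hD, Finset.mul_sum, map_zero] at this
  simp only [Finset.sum_apply, Pi.smul_apply, smul_eq_mul, Finset.sum_mul, Pi.zero_apply]
  rw [Finset.sum_comm, ← this]
  simp only [mul_assoc]

end NilHecke

theorem stmt10 (n : ℕ)
    (D : ∀ i, i + 1 < n → Module.End ℤ (MvPolynomial (Fin n) ℤ))
    (hD : ∀ i hi, IsDD n i hi (D i hi))
    (rwd : Equiv.Perm (Fin n) → List ℕ) (hrwd : ∀ w, IsReducedWord n (rwd w) w)
    (c : ((Fin n →₀ ℕ) × Equiv.Perm (Fin n)) →₀ ℤ)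
    (hc : (c.sum fun p a =>
        a • ((LinearMap.mulLeft ℤ (monomial p.1 (1 : ℤ)) :
              Module.End ℤ (MvPolynomial (Fin n) ℤ)) * Dword n D (rwd p.2))) = 0) :
    c = 0 := by
  open NilHecke in
  have hP (f : MvPolynomial (Fin n) ℤ) : ∑ v, coeffPoly c v * Dword n D (rwd v) f = 0 := by
    have := LinearMap.congr_fun hc f
    rw [LinearMap.finsupp_sum_apply] at this
    refine (sum_coeffPoly_mul c _).trans ((Finsupp.sum_congr fun p _ => ?_).trans this)
    rw [LinearMap.smul_apply, Module.End.mul_apply, LinearMap.mulLeft_apply, ← smul_mul_assoc,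
      smul_monomial, smul_eq_mul, mul_one]
  have hcoeffPoly : (fun v => algebraMap _ (FracField n) (coeffPoly c v)) = 0 :=
    eq_zero_of_sum_mul_triangular (fun v => (rwd v).length) (fun u w => ddCoeff n (rwd u) w)
      (fun w => ddCoeff_ne_zero_of_isReducedWord (hrwd w))
      (fun u w huw hlen => ddCoeff_eq_zero_of_length_le (hrwd u) (hrwd w) huw hlen) _
      (sum_mul_ddCoeff_eq_zero hD rwd _ hP)
  ext ⟨m, v⟩
  have hv : coeffPoly c v = 0 :=
    IsFractionRing.injective _ (FracField n) (by simpa using congrFun hcoeffPoly v)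
  rw [← coeff_coeffPoly, hv, coeff_zero, Finsupp.coe_zero, Pi.zero_apply]
end

section
/- The polynomial ring ℤ[x_1,...,x_n] is a free module over the subring Λ_n of symmetric polynomials with basis the set of monomials {x_1^{j_1} ··· x_n^{j_n} : 0 ≤ j_k ≤ n-k}. -/
/-!
Induction on the number of variables. Let `A` be the symmetric polynomials in `x₀, …, xₙ`.
A polynomial symmetric in `x₁, …, xₙ` is, by the fundamental theorem over `R[x₀]`, a polynomial
in `x₀` and the `eₖ(x₁, …, xₙ)`; since `eₖ₊₁(x₁, …, xₙ) = eₖ₊₁(x₀, …, xₙ) - x₀ eₖ(x₁, …, xₙ)`,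
it lies in `A[x₀]`, and reducing modulo `∏ⱼ (T - xⱼ)`, a monic polynomial over `A` killing `x₀`,
shows that `1, x₀, …, x₀ⁿ` span it over `A`. They are independent: permuting variables turns a
relation `∑ cᵢ x₀ⁱ = 0` with symmetric `cᵢ` into `∑ cᵢ xⱼⁱ = 0` for every `j`, and the
Vandermonde determinant of the `xⱼ` is nonzero. The induction hypothesis over `R[x₀]` in
`x₁, …, xₙ` then multiplies these bases into the staircase basis.
-/

open MvPolynomial

theorem Finsupp.cons_zero_eq_mapDomain_succ {n : ℕ} (d : Fin n →₀ ℕ) :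
    Finsupp.cons 0 d = d.mapDomain Fin.succ := by
  ext k
  cases k using Fin.cases with
  | zero =>
    rw [Finsupp.cons_zero, Finsupp.mapDomain_of_notMem_range]
    simp
  | succ j => simp [Finsupp.mapDomain_apply (Fin.succ_injective n)]

theorem Multiset.esymm_cons_succ {S : Type*} [CommSemiring S] (a : S) (s : Multiset S) (k : ℕ) :
    (a ::ₘ s).esymm (k + 1) = s.esymm (k + 1) + a * s.esymm k := by
  simp [Multiset.esymm, Multiset.powersetCard_cons, Multiset.map_map,
    Multiset.sum_map_mul_left]

namespace MvPolynomial

variable {R : Type*} [CommRing R]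

abbrev Staircase (n : ℕ) := {d : Fin n →₀ ℕ // ∀ k : Fin n, d k ≤ n - 1 - (k : ℕ)}

noncomputable instance (n : ℕ) : Fintype (Staircase n) :=
  Set.Finite.fintype <| (Set.finite_Iic (Finsupp.equivFunOnFinite.symm
    fun k : Fin n => n - 1 - (k : ℕ))).subset fun _ hd => Finsupp.le_def.2 hd

instance : Unique (Staircase 0) where
  default := ⟨0, fun k => k.elim0⟩
  uniq _ := Subsingleton.elim _ _

@[simp] theorem Staircase.coe_eq_zero (d : Staircase 0) : d.1 = 0 := Subsingleton.elim _ _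

noncomputable def Staircase.consEquiv (n : ℕ) :
    Fin (n + 1) × Staircase n ≃ Staircase (n + 1) where
  toFun p := ⟨Finsupp.cons p.1 p.2.1, Fin.cases (by simpa using Nat.lt_succ_iff.mp p.1.2)
    fun j => by simpa [Nat.sub_sub, Nat.add_comm] using p.2.2 j⟩
  invFun d := (⟨d.1 0, Nat.lt_succ_of_le (by simpa using d.2 0)⟩, ⟨Finsupp.tail d.1,
    fun k => by simpa [Finsupp.tail_apply, Nat.sub_sub, Nat.add_comm] using d.2 k.succ⟩)
  left_inv p := by ext <;> simp [Finsupp.tail_cons]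
  right_inv d := Subtype.ext (Finsupp.cons_tail d.1)

@[simp] theorem Staircase.consEquiv_apply_coe {n : ℕ} (p : Fin (n + 1) × Staircase n) :
    (Staircase.consEquiv n p).1 = Finsupp.cons (p.1 : ℕ) p.2.1 := rfl

theorem monomial_cons {n : ℕ} (i : ℕ) (d : Fin n →₀ ℕ) :
    monomial (Finsupp.cons i d) (1 : R) = X 0 ^ i * rename Fin.succ (monomial d 1) := by
  have h : Finsupp.cons i d = Finsupp.single 0 i + d.mapDomain Fin.succ := by
    rw [← Finsupp.cons_zero_eq_mapDomain_succ]
    ext k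
    cases k using Fin.cases <;> simp [Fin.succ_ne_zero]
  rw [h, X_pow_eq_monomial, rename_monomial, monomial_mul, one_mul]

/-- `x₀` moves into the coefficient ring, so that the induction hypothesis applies over `R[x₀]`. -/
noncomputable def finSuccCoeffEquiv (n : ℕ) (R : Type*) [CommRing R] :
    MvPolynomial (Fin (n + 1)) R ≃ₐ[R] MvPolynomial (Fin n) (Polynomial R) :=
  (renameEquiv R (_root_.finSuccEquiv n)).trans (optionEquivRight R (Fin n))

@[simp] theorem finSuccCoeffEquiv_X_zero {n : ℕ} :
    finSuccCoeffEquiv n R (X 0) = C Polynomial.X := by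
  simp [finSuccCoeffEquiv]

@[simp] theorem finSuccCoeffEquiv_X_succ {n : ℕ} (i : Fin n) :
    finSuccCoeffEquiv n R (X i.succ) = X i := by
  simp [finSuccCoeffEquiv]

theorem finSuccCoeffEquiv_rename_succ {n : ℕ} (q : MvPolynomial (Fin n) R) :
    finSuccCoeffEquiv n R (rename Fin.succ q) = map Polynomial.C q := by
  induction q using MvPolynomial.induction_on with
  | C a => simp [finSuccCoeffEquiv]
  | add p q hp hq => simp only [map_add, hp, hq]
  | mul_X p i hp => simp [hp]

theorem finSuccCoeffEquiv_symm_C {n : ℕ} (c : Polynomial R) :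
    (finSuccCoeffEquiv n R).symm (C c) = Polynomial.aeval (X 0) c := by
  rw [AlgEquiv.symm_apply_eq, ← Polynomial.aeval_algHom_apply, finSuccCoeffEquiv_X_zero,
    ← algebraMap_eq, Polynomial.aeval_algebraMap_apply, Polynomial.aeval_X_left_apply]

theorem rename_finSuccCoeffEquiv {n : ℕ} (σ : Equiv.Perm (Fin n))
    (p : MvPolynomial (Fin (n + 1)) R) :
    rename σ (finSuccCoeffEquiv n R p) =
      finSuccCoeffEquiv n R (rename (Equiv.Perm.decomposeFin.symm (0, σ)) p) := by
  induction p using MvPolynomial.induction_on with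
  | C a => simp [finSuccCoeffEquiv]
  | add p q hp hq => simp only [map_add, hp, hq]
  | mul_X p i hp =>
    cases i using Fin.cases <;>
      simp [hp, Equiv.Perm.decomposeFin_symm_apply_zero, Equiv.Perm.decomposeFin_symm_apply_succ]

theorem IsSymmetric.finSuccCoeffEquiv {n : ℕ} {p : MvPolynomial (Fin (n + 1)) R}
    (hp : p.IsSymmetric) : (finSuccCoeffEquiv n R p).IsSymmetric := fun σ => by
  rw [rename_finSuccCoeffEquiv, hp]

theorem esymm_fin_succ (n k : ℕ) :
    esymm (Fin (n + 1)) R (k + 1) =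
      rename Fin.succ (esymm (Fin n) R (k + 1)) + X 0 * rename Fin.succ (esymm (Fin n) R k) := by
  rw [rename_eq_aeval, aeval_esymm_eq_multiset_esymm, aeval_esymm_eq_multiset_esymm,
    esymm_eq_multiset_esymm, Fin.univ_succ, Finset.cons_val, Multiset.map_cons, Finset.map_val,
    Multiset.map_map]
  exact Multiset.esymm_cons_succ _ _ _

theorem rename_succ_esymm_mem_adjoin (n k : ℕ) :
    rename Fin.succ (esymm (Fin n) R k) ∈
      Algebra.adjoin (symmetricSubalgebra (Fin (n + 1)) R) {X 0} := by
  induction k with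
  | zero => simp [esymm_zero]
  | succ k ih =>
    have he : esymm (Fin (n + 1)) R (k + 1) ∈
        Algebra.adjoin (symmetricSubalgebra (Fin (n + 1)) R) {X 0} :=
      Subalgebra.algebraMap_mem (Algebra.adjoin _ _)
        (⟨_, esymm_isSymmetric (Fin (n + 1)) R (k + 1)⟩ : symmetricSubalgebra (Fin (n + 1)) R)
    rw [eq_sub_of_add_eq (esymm_fin_succ n k).symm]
    exact Subalgebra.sub_mem _ he (Subalgebra.mul_mem _ (Algebra.subset_adjoin rfl) ih)

theorem mem_adjoin_X_zero_of_isSymmetric {n : ℕ} {p : MvPolynomial (Fin (n + 1)) R}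
    (hp : (finSuccCoeffEquiv n R p).IsSymmetric) :
    p ∈ Algebra.adjoin (symmetricSubalgebra (Fin (n + 1)) R) {X 0} := by
  obtain ⟨w, hw⟩ := esymmAlgHom_surjective (Polynomial R) (by simp : Fintype.card (Fin n) ≤ n)
    ⟨_, hp⟩
  have hpw : finSuccCoeffEquiv n R p = aeval (fun i : Fin n ↦ esymm (Fin n) _ (i + 1)) w := by
    rw [← esymmAlgHom_apply, hw]
  rw [← (finSuccCoeffEquiv n R).symm_apply_apply p, hpw]
  clear hw hpw
  induction w using MvPolynomial.induction_on with
  | C c =>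
    rw [aeval_C, algebraMap_eq, finSuccCoeffEquiv_symm_C, ← Polynomial.aeval_map_algebraMap
      (symmetricSubalgebra (Fin (n + 1)) R)]
    exact Polynomial.aeval_mem_adjoin_singleton _ _
  | add p q hp hq => simpa only [map_add] using Subalgebra.add_mem _ hp hq
  | mul_X p i hp =>
    rw [map_mul, map_mul, aeval_X, ← map_esymm (Fin n) R _ Polynomial.C,
      ← finSuccCoeffEquiv_rename_succ, AlgEquiv.symm_apply_apply]
    exact Subalgebra.mul_mem _ hp (rename_succ_esymm_mem_adjoin n _)

theorem exists_monic_natDegree_eq_aeval_X_eq_zero {σ : Type*} [Fintype σ] [Nontrivial R]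
    (a : σ) : ∃ q : Polynomial (symmetricSubalgebra σ R), q.Monic ∧
      q.natDegree = Fintype.card σ ∧ Polynomial.aeval (X a : MvPolynomial σ R) q = 0 := by
  set P := ∏ j : σ, (Polynomial.X - Polynomial.C (X j : MvPolynomial σ R))
  have hP : P ∈ Polynomial.lifts (algebraMap (symmetricSubalgebra σ R) (MvPolynomial σ R)) := by
    refine (Polynomial.lifts_iff_coeff_lifts P).2 fun k => ⟨⟨P.coeff k, fun e => ?_⟩, rfl⟩
    have hPe : P.map (rename e : MvPolynomial σ R →ₐ[R] MvPolynomial σ R).toRingHom = P := by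
      simp only [P, Polynomial.map_prod, Polynomial.map_sub, Polynomial.map_X, Polynomial.map_C,
        AlgHom.toRingHom_eq_coe, RingHom.coe_coe, rename_X]
      exact Equiv.prod_comp e (fun j => Polynomial.X - Polynomial.C (X j))
    simpa [Polynomial.coeff_map] using congrArg (Polynomial.coeff · k) hPe
  obtain ⟨q, hqP, hdeg, hmonic⟩ :=
    Polynomial.lifts_and_natDegree_eq_and_monic hP (Polynomial.monic_prod_X_sub_C _ _)
  refine ⟨q, hmonic, by simp [hdeg, P], ?_⟩
  rw [Polynomial.aeval_def, ← Polynomial.eval_map, hqP, Polynomial.eval_prod]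
  exact Finset.prod_eq_zero (Finset.mem_univ a) (by simp)

theorem exists_sum_mul_X_pow_of_mem_adjoin [Nontrivial R] {m : ℕ} (a : Fin m)
    {p : MvPolynomial (Fin m) R}
    (hp : p ∈ Algebra.adjoin (symmetricSubalgebra (Fin m) R) {X a}) :
    ∃ c : Fin m → MvPolynomial (Fin m) R,
      (∀ i, (c i).IsSymmetric) ∧ p = ∑ i, c i * X a ^ (i : ℕ) := by
  rw [Algebra.adjoin_singleton_eq_range_aeval] at hp
  obtain ⟨g, rfl⟩ := hp
  obtain ⟨q, hmonic, hdeg, hq⟩ := exists_monic_natDegree_eq_aeval_X_eq_zero (R := R) a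
  rw [Fintype.card_fin] at hdeg
  have hrdeg : (g %ₘ q).natDegree < m := by
    refine (Polynomial.natDegree_modByMonic_lt g hmonic fun h => a.pos.ne ?_).trans_eq hdeg
    simpa [h] using hdeg
  have hg : Polynomial.aeval (X a : MvPolynomial (Fin m) R) g =
      Polynomial.aeval (X a) (g %ₘ q) := by
    conv_lhs => rw [← Polynomial.modByMonic_add_div g q]
    rw [map_add, map_mul, hq, zero_mul, add_zero]
  refine ⟨fun i => (g %ₘ q).coeff i, fun i => ((g %ₘ q).coeff i).2, ?_⟩
  rw [AlgHom.toRingHom_eq_coe, RingHom.coe_coe, hg, Polynomial.aeval_eq_sum_range' hrdeg,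
    ← Fin.sum_univ_eq_sum_range]
  simp only [Subalgebra.smul_def, smul_eq_mul]

theorem eq_zero_of_sum_mul_X_pow_eq_zero [IsDomain R] {m : ℕ}
    {c : Fin m → MvPolynomial (Fin m) R} (hc : ∀ i, (c i).IsSymmetric) (a : Fin m)
    (h : ∑ i, c i * X a ^ (i : ℕ) = 0) : c = 0 := by
  have hj (j : Fin m) : ∑ i : Fin m, X j ^ (i : ℕ) * c i = 0 := by
    simpa [map_sum, hc _ (Equiv.swap a j), mul_comm] using congrArg (rename (Equiv.swap a j)) h
  exact Matrix.eq_zero_of_mulVec_eq_zero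
    (Matrix.det_vandermonde_ne_zero_iff.2 (X_injective (R := R))) (_root_.funext hj)

theorem sum_staircase_succ {n : ℕ} (c : Staircase (n + 1) → MvPolynomial (Fin (n + 1)) R) :
    ∑ d, c d * monomial d.1 1 = ∑ d' : Staircase n,
      (∑ i : Fin (n + 1), c (Staircase.consEquiv n (i, d')) * X 0 ^ (i : ℕ)) *
        rename Fin.succ (monomial d'.1 1) := by
  rw [← (Staircase.consEquiv n).sum_comp, Fintype.sum_prod_type, Finset.sum_comm]
  simp only [Finset.sum_mul, mul_assoc, Staircase.consEquiv_apply_coe, monomial_cons]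

theorem exists_isSymmetric_sum_mul_monomial_staircase [Nontrivial R] {n : ℕ}
    (p : MvPolynomial (Fin n) R) :
    ∃ c : Staircase n → MvPolynomial (Fin n) R,
      (∀ d, (c d).IsSymmetric) ∧ p = ∑ d, c d * monomial d.1 1 := by
  induction n generalizing R with
  | zero =>
    refine ⟨fun _ => p, fun _ e => ?_, by simp⟩
    rw [Subsingleton.elim e 1, Equiv.Perm.coe_one, rename_id_apply]
  | succ n ih =>
    obtain ⟨c', hc', hp⟩ := ih (finSuccCoeffEquiv n R p)
    choose a ha hsum using fun d' => exists_sum_mul_X_pow_of_mem_adjoin 0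
      (mem_adjoin_X_zero_of_isSymmetric (p := (finSuccCoeffEquiv n R).symm (c' d'))
        (by simpa using hc' d'))
    refine ⟨fun d => a ((Staircase.consEquiv n).symm d).2 ((Staircase.consEquiv n).symm d).1,
      fun d => ha _ _, ?_⟩
    apply (finSuccCoeffEquiv n R).injective
    simp only [sum_staircase_succ, Equiv.symm_apply_apply, ← hsum, hp, map_sum, map_mul,
      AlgEquiv.apply_symm_apply, finSuccCoeffEquiv_rename_succ, map_monomial, map_one]

theorem eq_zero_of_sum_mul_monomial_staircase_eq_zero [IsDomain R] {n : ℕ}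
    {c : Staircase n → MvPolynomial (Fin n) R} (hc : ∀ d, (c d).IsSymmetric)
    (h : ∑ d, c d * monomial d.1 1 = 0) : c = 0 := by
  induction n generalizing R with
  | zero =>
    ext1 d
    simpa [Subsingleton.elim d default] using h
  | succ n ih =>
    let g (d' : Staircase n) : MvPolynomial (Fin (n + 1)) R :=
      ∑ i : Fin (n + 1), c (Staircase.consEquiv n (i, d')) * X 0 ^ (i : ℕ)
    rw [sum_staircase_succ] at h
    have hgE : ∑ d', finSuccCoeffEquiv n R (g d') * monomial d'.1 1 = 0 := by
      have := congrArg (finSuccCoeffEquiv n R) h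
      rw [map_sum, map_zero] at this
      simpa only [map_mul, finSuccCoeffEquiv_rename_succ, map_monomial, map_one] using this
    have hg_symm (d' : Staircase n) : (finSuccCoeffEquiv n R (g d')).IsSymmetric := by
      simp only [g, map_sum, map_mul, map_pow, finSuccCoeffEquiv_X_zero]
      exact Subalgebra.sum_mem (symmetricSubalgebra _ _) fun i _ =>
        Subalgebra.mul_mem _ (hc _).finSuccCoeffEquiv (Subalgebra.pow_mem _ (IsSymmetric.C _) _)
    have hg (d' : Staircase n) : g d' = 0 :=
      (finSuccCoeffEquiv n R).injective (by simpa using congrFun (ih hg_symm hgE) d')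
    funext d
    obtain ⟨⟨i, d'⟩, rfl⟩ := (Staircase.consEquiv n).surjective d
    exact congrFun (eq_zero_of_sum_mul_X_pow_eq_zero (fun _ => hc _) 0 (hg d')) i

variable (R) in
theorem linearIndependent_monomial_staircase [IsDomain R] (n : ℕ) :
    LinearIndependent (symmetricSubalgebra (Fin n) R)
      fun d : Staircase n => (monomial d.1 1 : MvPolynomial (Fin n) R) := by
  refine Fintype.linearIndependent_iff.2 fun g hg d => Subtype.ext ?_
  have hc (d : Staircase n) : (g d : MvPolynomial (Fin n) R).IsSymmetric := (g d).2
  exact congrFun (eq_zero_of_sum_mul_monomial_staircase_eq_zero hc hg) d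

variable (R) in
theorem span_monomial_staircase [Nontrivial R] (n : ℕ) :
    Submodule.span (symmetricSubalgebra (Fin n) R)
      (Set.range fun d : Staircase n => (monomial d.1 1 : MvPolynomial (Fin n) R)) = ⊤ := by
  refine Submodule.eq_top_iff'.2 fun p => ?_
  obtain ⟨c, hc, rfl⟩ := exists_isSymmetric_sum_mul_monomial_staircase p
  exact (Submodule.mem_span_range_iff_exists_fun _).2 ⟨fun d => ⟨c d, hc d⟩, rfl⟩

noncomputable def staircaseBasis (n : ℕ) (R : Type*) [CommRing R] [IsDomain R] :
    Module.Basis (Staircase n) (symmetricSubalgebra (Fin n) R) (MvPolynomial (Fin n) R) :=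
  .mk (linearIndependent_monomial_staircase R n) (span_monomial_staircase R n).ge

theorem staircaseBasis_apply (n : ℕ) (R : Type*) [CommRing R] [IsDomain R] (d : Staircase n) :
    staircaseBasis n R d = monomial d.1 1 :=
  Module.Basis.mk_apply _ _ d

end MvPolynomial

theorem stmt13 (n : ℕ) :
    ∃ b : Module.Basis {d : Fin n →₀ ℕ // ∀ k : Fin n, d k ≤ n - 1 - (k : ℕ)}
        (symmetricSubalgebra (Fin n) ℤ) (MvPolynomial (Fin n) ℤ),
      ∀ d, b d = monomial d.1 1 :=
  ⟨staircaseBasis n ℤ, staircaseBasis_apply n ℤ⟩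
end

section
/- Let R = ℤ[r_1, r_2, ...] and R_n = R[x_1,...,x_n]. The R-linear map α(v_n) : R_n → R_{n-1} defined on monomials by x_1^{i_1}···x_{n-1}^{i_{n-1}} x_n^{i_n} ↦ x_1^{i_1}···x_{n-1}^{i_{n-1}} r_{i_n} (with r_0 := 1) satisfies the relation (F): α(v_{n-1}) ∘ α(v_n) = α(v_{n-1}) ∘ α(v_n) ∘ s_{n-1}, where s_{n-1} is the operator on R_n swapping x_{n-1} and x_n. -/
open MvPolynomial

/-! Applying `α(v_{n+1})` and then `α(v_n)` to a monomial replaces the exponents `i`, `j` of the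
last two variables by the coefficient `r_j r_i`. As `R` is commutative this is symmetric in `i`
and `j`, so precomposing with the swap of those two variables changes nothing. -/

/-- The generators `r_i` of `R = ℤ[r_1, r_2, ...]`, with `r_0 = 1`. -/
noncomputable def rgen (i : ℕ) : MvPolynomial ℕ ℤ := if i = 0 then 1 else X i

/-- `A` is the `R`-linear map `α(v_{n+1}) : R_{n+1} → R_n` sending
`x_1^{i_1} ⋯ x_n^{i_n} x_{n+1}^{i_{n+1}}` to `x_1^{i_1} ⋯ x_n^{i_n} r_{i_{n+1}}`. -/
def IsAlpha (n : ℕ)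
    (A : MvPolynomial (Fin (n + 1)) (MvPolynomial ℕ ℤ) →ₗ[MvPolynomial ℕ ℤ]
         MvPolynomial (Fin n) (MvPolynomial ℕ ℤ)) : Prop :=
  ∀ d : Fin (n + 1) →₀ ℕ,
    A (monomial d 1) =
      C (rgen (d (Fin.last n))) *
        monomial (Finsupp.equivFunOnFinite.symm fun k : Fin n => d k.castSucc) 1

theorem IsAlpha.comp_monomial {n : ℕ}
    {A1 : MvPolynomial (Fin (n + 2)) (MvPolynomial ℕ ℤ) →ₗ[MvPolynomial ℕ ℤ]
          MvPolynomial (Fin (n + 1)) (MvPolynomial ℕ ℤ)}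
    {A2 : MvPolynomial (Fin (n + 1)) (MvPolynomial ℕ ℤ) →ₗ[MvPolynomial ℕ ℤ]
          MvPolynomial (Fin n) (MvPolynomial ℕ ℤ)}
    (h1 : IsAlpha (n + 1) A1) (h2 : IsAlpha n A2) (e : Fin (n + 2) →₀ ℕ) :
    A2 (A1 (monomial e 1)) =
      C (rgen (e (Fin.last (n + 1))) * rgen (e (Fin.last n).castSucc)) *
        monomial (Finsupp.equivFunOnFinite.symm fun k : Fin n => e k.castSucc.castSucc) 1 := by
  rw [h1 e, ← smul_eq_C_mul, map_smul, h2, smul_eq_C_mul]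
  simp only [Finsupp.coe_equivFunOnFinite_symm, C_mul]
  ring

theorem Fin.swap_last_castSucc_last_apply_castSucc_castSucc {n : ℕ} (k : Fin n) :
    Equiv.swap (Fin.last (n + 1)) (Fin.last n).castSucc k.castSucc.castSucc =
      k.castSucc.castSucc :=
  Equiv.swap_apply_of_ne_of_ne (Fin.castSucc_lt_last k.castSucc).ne
    (Fin.castSucc_injective _ |>.ne (Fin.castSucc_lt_last k).ne)

theorem stmt17 (n : ℕ)
    (A1 : MvPolynomial (Fin (n + 2)) (MvPolynomial ℕ ℤ) →ₗ[MvPolynomial ℕ ℤ]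
          MvPolynomial (Fin (n + 1)) (MvPolynomial ℕ ℤ))
    (A2 : MvPolynomial (Fin (n + 1)) (MvPolynomial ℕ ℤ) →ₗ[MvPolynomial ℕ ℤ]
          MvPolynomial (Fin n) (MvPolynomial ℕ ℤ))
    (h1 : IsAlpha (n + 1) A1) (h2 : IsAlpha n A2) :
    A2 ∘ₗ A1 = A2 ∘ₗ A1 ∘ₗ
      (rename (Equiv.swap (Fin.last (n + 1)) ((Fin.last n).castSucc))).toLinearMap := by
  refine (basisMonomials _ _).ext fun d => ?_
  simp only [coe_basisMonomials, LinearMap.comp_apply, AlgHom.toLinearMap_apply,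
    rename_monomial, h1.comp_monomial h2]
  simp only [Finsupp.mapDomain_equiv_apply, Equiv.symm_swap, Equiv.swap_apply_left,
    Equiv.swap_apply_right, Fin.swap_last_castSucc_last_apply_castSucc_castSucc, mul_comm]
end

section
/- Let N be the NH_n-bimodule NH_n ⊗_{NH_{n-1}} NH_n, free as a left NH_n-module with basis b_{i,k} = 1 ⊗ (x_n^i ∂_{n-1}∂_{n-2}···∂_{n-k}) for i ≥ 0 and 0 ≤ k ≤ n-1 (with the empty product for k = 0). Then the center of this bimodule is trivial: if c ∈ N satisfies a·c = c·a for all a ∈ NH_n, then c = 0. -/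
open MvPolynomial

/-- The nilHecke algebra `NH_n`, realized as the subalgebra of endomorphisms of
`ℤ[x_1,…,x_n]` generated by the multiplication operators and the divided difference
operators. -/
noncomputable def NHalg (n : ℕ)
    (D : ∀ i, i + 1 < n → Module.End ℤ (MvPolynomial (Fin n) ℤ)) :
    Subalgebra ℤ (Module.End ℤ (MvPolynomial (Fin n) ℤ)) :=
  Algebra.adjoin ℤ
    ({a | ∃ j, ∃ hj : j < n, a = Xmul n j hj} ∪ {a | ∃ i, ∃ hi : i + 1 < n, a = D i hi})

/-- The subalgebra `NH_{n-1} ⊂ NH_n` generated by `x_1,…,x_{n-1}` and `∂_1,…,∂_{n-2}`. -/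
noncomputable def NHalg' (n : ℕ)
    (D : ∀ i, i + 1 < n → Module.End ℤ (MvPolynomial (Fin n) ℤ)) :
    Subalgebra ℤ (Module.End ℤ (MvPolynomial (Fin n) ℤ)) :=
  Algebra.adjoin ℤ
    ({a | ∃ j, ∃ hj : j + 1 < n, a = Xmul n j (Nat.lt_of_succ_lt hj)} ∪
     {a | ∃ i, ∃ hi : i + 2 < n, a = D i (Nat.lt_of_succ_lt hi)})

/-- The operator `∂_{n-1} ∂_{n-2} ⋯ ∂_{n-k}` (in 1-indexed notation). -/
noncomputable def chainD (n : ℕ)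
    (D : ∀ i, i + 1 < n → Module.End ℤ (MvPolynomial (Fin n) ℤ)) (k : ℕ) :
    Module.End ℤ (MvPolynomial (Fin n) ℤ) :=
  ((List.range k).map fun j => if h : n - 2 - j + 1 < n then D (n - 2 - j) h else 1).prod

/-!
Write `c = ∑ r_{i,k} b_{i,k}` and show that the columns `k = n-1, …, 0` of coefficients vanish
one after another. Fix `k`, assume the columns above `k` vanish, and let `g = x_{n-k}`,
an element of `NH_{n-1}`. The nilHecke relations give
`∂_{n-1}⋯∂_{n-k} x_{n-k} = x_n ∂_{n-1}⋯∂_{n-k} + ∑_{m<k} a_m ∂_{n-1}⋯∂_{n-m}`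
with `a_m ∈ NH_{n-1}`, and `g` commutes with `x_n^i ∂_{n-1}⋯∂_{n-m}` for `m < k`. As `NH_{n-1}`
(which contains `a_m` and `g` and commutes with `x_n`) acts on `1 ⊗ 1` from both sides alike,
right multiplication by `g` sends `b_{i,k}` to `b_{i+1,k}` modulo lower columns and preserves
the lower columns. Comparing `(i+1,k)`-coefficients in `g·c = c·g` gives `r_{i,k} = g r_{i+1,k}`,
so `r_{i,k} = g^d r_{i+d,k} = 0` for `d` large.
-/

open Filter MulOpposite Submodule

lemma eq_zero_of_eq_mul_succ {R : Type*} [Semiring R] {r : ℕ → R} {g : R}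
    (hr : ∀ j, r j = g * r (j + 1)) (hfin : ∀ᶠ j in atTop, r j = 0) (j : ℕ) : r j = 0 := by
  obtain ⟨B, hB⟩ := eventually_atTop.1 hfin
  have hpow : ∀ d j, r j = g ^ d * r (j + d) := by
    intro d
    induction d with
    | zero => simp
    | succ d ih => intro j; rw [ih j, hr (j + d), ← mul_assoc, ← pow_succ, add_assoc]
  rw [hpow B j, hB (j + B) (Nat.le_add_left B j), mul_zero]

namespace Module.Basis

variable {R M : Type*} [Ring R] [AddCommGroup M] [Module R M]

lemma repr_eq_zero_of_mem_span_image {ι : Type*} (b : Basis ι R M) {s : Set ι} {m : M}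
    (hm : m ∈ span R (b '' s)) {p : ι} (hp : p ∉ s) : b.repr m p = 0 :=
  Finsupp.notMem_support_iff.1 fun h => hp (b.mem_span_image.1 hm h)

variable {κ : Type*}

lemma eventually_repr_eq_zero (b : Basis (ℕ × κ) R M) (m : M) (k : κ) :
    ∀ᶠ j in atTop, b.repr m (j, k) = 0 := by
  have hfin : {j | b.repr m (j, k) ≠ 0}.Finite :=
    Set.Finite.preimage (Prod.mk_left_injective k).injOn (b.repr m).hasFiniteSupport
  simpa [← Nat.cofinite_eq_atTop] using hfin.eventually_cofinite_notMem

lemma repr_column_eq_zero [LinearOrder κ] (b : Basis (ℕ × κ) R M) (T : M →ₗ[R] M) (g : R)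
    {k : κ} {c : M}
    (hT : ∀ i, T (b (i, k)) - b (i + 1, k) ∈ span R (b '' {p | p.2 < k}))
    (hTlow : ∀ p : ℕ × κ, p.2 < k → T (b p) ∈ span R (b '' {p | p.2 < k}))
    (hhigh : ∀ p : ℕ × κ, k < p.2 → b.repr c p = 0) (hc : g • c = T c) (i : ℕ) :
    b.repr c (i, k) = 0 := by
  refine eq_zero_of_eq_mul_succ (g := g) (fun j => ?_) (b.eventually_repr_eq_zero c k) i
  have hcoord : Set.EqOn (b.coord (j + 1, k) ∘ₗ T) (b.coord (j, k))
      (span R (b '' {p | p.2 ≤ k})) := by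
    refine LinearMap.eqOn_span' ?_
    rintro _ ⟨⟨i', k'⟩, hk' : k' ≤ k, rfl⟩
    have hcol : (j + 1, k) ∉ {p : ℕ × κ | p.2 < k} := lt_irrefl k
    rcases hk'.lt_or_eq with hlt | rfl
    · simp [b.repr_eq_zero_of_mem_span_image (hTlow (i', k') hlt) hcol, hlt.ne]
    · have := b.repr_eq_zero_of_mem_span_image (hT i') hcol
      simp only [map_sub, Finsupp.sub_apply, repr_self, sub_eq_zero] at this
      simp [this, Finsupp.single_apply]
  have hc_mem : c ∈ span R (b '' {p | p.2 ≤ k}) :=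
    b.mem_span_image.2 fun p hp => not_lt.1 fun h => Finsupp.mem_support_iff.1 hp (hhigh p h)
  simpa [← hc] using (hcoord hc_mem).symm

end Module.Basis

lemma smul_op_smul_of_smul_eq_op_smul {A N : Type*} [Monoid A] [MulAction A N]
    [MulAction Aᵐᵒᵖ N] [SMulCommClass A Aᵐᵒᵖ N] {a : A} {b : N} (h : a • b = op a • b) (t : A) :
    a • op t • b = op (a * t) • b := by
  rw [smul_comm, h, smul_smul, ← op_mul]

section DividedDifference

variable {n : ℕ}

lemma X_sub_X_succ_ne_zero {i : ℕ} (hi : i + 1 < n) :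
    (X ⟨i, Nat.lt_of_succ_lt hi⟩ - X ⟨i + 1, hi⟩ : MvPolynomial (Fin n) ℤ) ≠ 0 :=
  sub_ne_zero.2 fun h => by simpa using X_injective h

lemma swapVar_X_of_ne {i : ℕ} (hi : i + 1 < n) {j : Fin n} (h1 : (j : ℕ) ≠ i)
    (h2 : (j : ℕ) ≠ i + 1) : swapVar n i hi (X j) = X j := by
  rw [swapVar, rename_X, Equiv.swap_apply_of_ne_of_ne (by grind) (by grind)]

lemma swapVar_comm {i j : ℕ} (hi : i + 1 < n) (hj : j + 1 < n) (hij : i + 1 < j ∨ j + 1 < i)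
    (f : MvPolynomial (Fin n) ℤ) :
    swapVar n i hi (swapVar n j hj f) = swapVar n j hj (swapVar n i hi f) := by
  simp only [swapVar, rename_rename]
  congr 2
  funext x
  simp only [Function.comp_apply, Equiv.swap_apply_def]
  split_ifs <;> grind

variable {i : ℕ} {hi : i + 1 < n} {Di : Module.End ℤ (MvPolynomial (Fin n) ℤ)}

lemma IsDD.map_mul_of_swapVar_eq (h : IsDD n i hi Di) {p : MvPolynomial (Fin n) ℤ}
    (hp : swapVar n i hi p = p) (f : MvPolynomial (Fin n) ℤ) : Di (p * f) = p * Di f := by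
  have hs : swapVar n i hi (p * f) = p * swapVar n i hi f := by rw [map_mul, hp]
  refine mul_left_cancel₀ (X_sub_X_succ_ne_zero hi) ?_
  linear_combination h (p * f) - p * h f - hs

lemma IsDD.mul_Xmul_self (h : IsDD n i hi Di) :
    Di * Xmul n i (Nat.lt_of_succ_lt hi) = Xmul n (i + 1) hi * Di + 1 := by
  refine LinearMap.ext fun f => mul_left_cancel₀ (X_sub_X_succ_ne_zero hi) ?_
  have hs : swapVar n i hi (X ⟨i, Nat.lt_of_succ_lt hi⟩ * f) =
      X ⟨i + 1, hi⟩ * swapVar n i hi f := by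
    rw [map_mul, swapVar, rename_X, Equiv.swap_apply_left]
  simp only [Module.End.mul_apply, LinearMap.add_apply, Module.End.one_apply, Xmul,
    LinearMap.mulLeft_apply]
  linear_combination h (X ⟨i, Nat.lt_of_succ_lt hi⟩ * f) - X ⟨i + 1, hi⟩ * h f - hs

lemma IsDD.commute_Xmul (h : IsDD n i hi Di) {j : ℕ} (hj : j < n) (h1 : j ≠ i)
    (h2 : j ≠ i + 1) : Commute Di (Xmul n j hj) :=
  LinearMap.ext fun f => h.map_mul_of_swapVar_eq (swapVar_X_of_ne hi h1 h2) f

lemma swapVar_X_sub_X_succ {j : ℕ} (hj : j + 1 < n) (hij : i + 1 < j ∨ j + 1 < i) :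
    swapVar n j hj (X ⟨i, Nat.lt_of_succ_lt hi⟩ - X ⟨i + 1, hi⟩) =
      X ⟨i, Nat.lt_of_succ_lt hi⟩ - X ⟨i + 1, hi⟩ := by
  rw [map_sub, swapVar_X_of_ne hj (by grind) (by grind), swapVar_X_of_ne hj (by grind) (by grind)]

lemma IsDD.swapVar_apply (h : IsDD n i hi Di) {j : ℕ} (hj : j + 1 < n)
    (hij : i + 1 < j ∨ j + 1 < i) (f : MvPolynomial (Fin n) ℤ) :
    swapVar n j hj (Di f) = Di (swapVar n j hj f) := by
  refine mul_left_cancel₀ (X_sub_X_succ_ne_zero hi) ?_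
  rw [h, swapVar_comm hi hj hij, ← map_sub, ← h, map_mul, swapVar_X_sub_X_succ hj hij]

lemma IsDD.commute {j : ℕ} {hj : j + 1 < n} {Dj : Module.End ℤ (MvPolynomial (Fin n) ℤ)}
    (h : IsDD n i hi Di) (h' : IsDD n j hj Dj) (hij : i + 1 < j ∨ j + 1 < i) :
    Commute Di Dj := by
  refine LinearMap.ext fun f => mul_left_cancel₀ (X_sub_X_succ_ne_zero hi) ?_
  rw [Module.End.mul_apply, Module.End.mul_apply, h,
    ← h'.map_mul_of_swapVar_eq (swapVar_X_sub_X_succ hj hij), h, map_sub,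
    h'.swapVar_apply hi hij.symm]

end DividedDifference

namespace NHalg

variable {n : ℕ} {D : ∀ i, i + 1 < n → Module.End ℤ (MvPolynomial (Fin n) ℤ)}

variable (D) in
noncomputable def x (j : ℕ) (hj : j < n) : NHalg n D :=
  ⟨Xmul n j hj, Algebra.subset_adjoin (Or.inl ⟨j, hj, rfl⟩)⟩

def d (i : ℕ) (hi : i + 1 < n) : NHalg n D :=
  ⟨D i hi, Algebra.subset_adjoin (Or.inr ⟨i, hi, rfl⟩)⟩

variable (D) in
noncomputable def chain (k : ℕ) : NHalg n D :=
  ⟨chainD n D k, Subalgebra.list_prod_mem _ fun a ha => by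
    obtain ⟨j, -, rfl⟩ := List.mem_map.1 ha
    split
    · exact (d _ _ : NHalg n D).2
    · exact one_mem _⟩

lemma x_congr {a b : ℕ} (h : a = b) (ha : a < n) (hb : b < n) : x D a ha = x D b hb := by
  subst h; rfl

lemma chain_zero : chain D 0 = 1 := Subtype.ext (by simp [chain, chainD])

lemma chain_succ (hn : 2 ≤ n) (k : ℕ) :
    chain D (k + 1) = chain D k * d (n - 2 - k) (by omega) := by
  refine Subtype.ext ?_
  simp [chain, chainD, d, List.range_succ, dif_pos (show n - 2 - k + 1 < n by omega)]

lemma commute_x_x {a b : ℕ} (ha : a < n) (hb : b < n) : Commute (x D a ha) (x D b hb) :=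
  Subtype.ext <| LinearMap.ext fun f => mul_left_comm _ _ f

variable (D) in
noncomputable def lowerChains (k : ℕ) : AddSubgroup (NHalg n D) :=
  AddSubgroup.closure
    {y | ∃ v : NHalg n D, (v : Module.End ℤ _) ∈ NHalg' n D ∧ ∃ m < k, y = v * chain D m}

lemma chain_mem_lowerChains {m k : ℕ} (h : m < k) : chain D m ∈ lowerChains D k :=
  AddSubgroup.subset_closure ⟨1, one_mem _, m, h, (one_mul _).symm⟩

section Relations

variable (hD : ∀ i hi, IsDD n i hi (D i hi))
include hD

lemma d_mul_x_self {i : ℕ} (hi : i + 1 < n) :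
    d i hi * x D i (Nat.lt_of_succ_lt hi) = x D (i + 1) hi * d i hi + 1 :=
  Subtype.ext (hD i hi).mul_Xmul_self

lemma commute_d_x {i j : ℕ} (hi : i + 1 < n) (hj : j < n) (h1 : j ≠ i) (h2 : j ≠ i + 1) :
    Commute (d i hi) (x D j hj) :=
  Subtype.ext ((hD i hi).commute_Xmul hj h1 h2).eq

lemma commute_d_d {i j : ℕ} (hi : i + 1 < n) (hj : j + 1 < n) (hij : i + 1 < j ∨ j + 1 < i) :
    Commute (d i hi : NHalg n D) (d j hj) :=
  Subtype.ext ((hD i hi).commute (hD j hj) hij).eq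

lemma commute_d_chain (hn : 2 ≤ n) {j : ℕ} (hj : j + 1 < n) :
    ∀ {m : ℕ}, j + m + 2 < n → Commute (d j hj) (chain D m)
  | 0, _ => chain_zero (D := D) ▸ Commute.one_right _
  | m + 1, h => by
    rw [chain_succ hn]
    exact (commute_d_chain hn hj (by omega)).mul_right (commute_d_d hD hj _ (by omega))

lemma commute_x_chain (hn : 2 ≤ n) {j : ℕ} (hj : j < n) :
    ∀ {m : ℕ}, j + m + 1 < n → Commute (x D j hj) (chain D m)
  | 0, _ => chain_zero (D := D) ▸ Commute.one_right _
  | m + 1, h => by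
    rw [chain_succ hn]
    exact (commute_x_chain hn hj (by omega)).mul_right
      (commute_d_x hD _ hj (by omega) (by omega)).symm

lemma commute_x_last_of_mem (hn : 0 < n) {v : NHalg n D}
    (hv : (v : Module.End ℤ _) ∈ NHalg' n D) :
    Commute (x D (n - 1) (Nat.sub_one_lt_of_lt hn)) v := by
  have hle : NHalg' n D ≤
      Subalgebra.centralizer ℤ {(x D (n - 1) (Nat.sub_one_lt_of_lt hn) : Module.End ℤ _)} := by
    refine Algebra.adjoin_le ?_
    rintro _ (⟨j, hj, rfl⟩ | ⟨i, hi, rfl⟩) <;>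
      rw [SetLike.mem_coe, Subalgebra.mem_centralizer_iff] <;> rintro _ rfl
    · exact congrArg Subtype.val (commute_x_x (D := D) _ (Nat.lt_of_succ_lt hj))
    · exact congrArg Subtype.val
        (commute_d_x hD (Nat.lt_of_succ_lt hi) _ (by omega) (by omega)).symm
  exact Subtype.ext ((Subalgebra.mem_centralizer_iff ℤ).1 (hle hv) _ rfl)

lemma mul_d_mem_lowerChains (hn : 2 ≤ n) {k : ℕ} (hk : k + 1 < n) {s : NHalg n D}
    (hs : s ∈ lowerChains D k) : s * d (n - 2 - k) (by omega) ∈ lowerChains D (k + 1) := by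
  refine (AddSubgroup.closure_le (K := (lowerChains D (k + 1)).comap
    (AddMonoidHom.mulRight (d (n - 2 - k) (by omega) : NHalg n D)))).2 ?_ hs
  rintro _ ⟨v, hv, m, hm, rfl⟩
  rw [SetLike.mem_coe, AddSubgroup.mem_comap, AddMonoidHom.mulRight_apply, mul_assoc,
    ← (commute_d_chain hD hn _ (by omega)).eq, ← mul_assoc]
  have hd : ((d (n - 2 - k) (by omega) : NHalg n D) : Module.End ℤ _) ∈ NHalg' n D :=
    Algebra.subset_adjoin (Or.inr ⟨n - 2 - k, by omega, rfl⟩)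
  exact AddSubgroup.subset_closure ⟨_, mul_mem hv hd, m, by omega, rfl⟩

/-- With the 0-indexed variables of `x`, this says
`∂_{n-1}⋯∂_{n-k} x_{n-k} - x_n ∂_{n-1}⋯∂_{n-k} ∈ ∑_{m<k} NH_{n-1} ∂_{n-1}⋯∂_{n-m}`. -/
theorem chain_mul_x_sub_mem (hn : 2 ≤ n) :
    ∀ k (hk : k < n), chain D k * x D (n - 1 - k) (by omega) -
      x D (n - 1) (Nat.sub_one_lt_of_lt hn) * chain D k ∈ lowerChains D k
  | 0, _ => by simp [chain_zero]
  | k + 1, hk => by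
    have hrec : chain D (k + 1) * x D (n - 1 - (k + 1)) (by omega) -
        x D (n - 1) (Nat.sub_one_lt_of_lt hn) * chain D (k + 1) =
        (chain D k * x D (n - 1 - k) (by omega) -
          x D (n - 1) (Nat.sub_one_lt_of_lt hn) * chain D k) * d (n - 2 - k) (by omega) +
          chain D k := by
      rw [chain_succ hn, mul_assoc,
        x_congr (show n - 1 - (k + 1) = n - 2 - k by omega) _ (by omega), d_mul_x_self hD,
        x_congr (show n - 2 - k + 1 = n - 1 - k by omega) _ (by omega)]
      simp only [mul_add, mul_one, sub_mul, mul_assoc]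
      abel
    rw [hrec]
    exact add_mem (mul_d_mem_lowerChains hD hn hk (chain_mul_x_sub_mem hn k (by omega)))
      (chain_mem_lowerChains k.lt_succ_self)

end Relations

section Bimodule

variable {N : Type*} [AddCommGroup N] [Module (NHalg n D) N] [Module (NHalg n D)ᵐᵒᵖ N]
  [SMulCommClass (NHalg n D) (NHalg n D)ᵐᵒᵖ N] {bas : Module.Basis (ℕ × Fin n) (NHalg n D) N}
  {b₀ : N} (hD : ∀ i hi, IsDD n i hi (D i hi)) (hn : 2 ≤ n)
  (hbasis : ∀ i (k : Fin n),
    bas (i, k) = op (x D (n - 1) (Nat.sub_one_lt_of_lt hn) ^ i * chain D k) • b₀)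
  (hmid : ∀ a : NHalg n D, (a : Module.End ℤ _) ∈ NHalg' n D → a • b₀ = op a • b₀)
include hD hbasis hmid

lemma op_smul_mem_span_of_mem_lowerChains (i : ℕ) (k : Fin n) {y : NHalg n D}
    (hy : y ∈ lowerChains D k) :
    op (x D (n - 1) (Nat.sub_one_lt_of_lt hn) ^ i * y) • b₀ ∈
      span (NHalg n D) (bas '' {p | p.2 < k}) := by
  induction hy using AddSubgroup.closure_induction with
  | mem y hy =>
    obtain ⟨v, hv, m, hm, rfl⟩ := hy
    rw [← mul_assoc, ((commute_x_last_of_mem hD (Nat.zero_lt_of_lt hn) hv).pow_left i).eq,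
      mul_assoc, ← smul_op_smul_of_smul_eq_op_smul (hmid v hv), ← hbasis i ⟨m, by omega⟩]
    exact smul_mem _ _ (subset_span ⟨(i, ⟨m, by omega⟩), hm, rfl⟩)
  | zero => simp
  | add y z _ _ hy hz => simpa only [mul_add, op_add, add_smul] using add_mem hy hz
  | neg y _ hy =>
    convert neg_mem hy using 1
    rw [← neg_smul, ← op_neg]
    exact congrArg (op · • b₀) (mul_neg (x D (n - 1) (Nat.sub_one_lt_of_lt hn) ^ i) y)

lemma op_x_smul_basis_sub_mem (i : ℕ) (k : Fin n) :
    op (x D (n - 1 - k) (by omega)) • bas (i, k) - bas (i + 1, k) ∈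
      span (NHalg n D) (bas '' {p | p.2 < k}) := by
  rw [hbasis, hbasis, smul_smul, ← op_mul, ← sub_smul, ← op_sub, pow_succ, mul_assoc,
    mul_assoc, ← mul_sub]
  exact op_smul_mem_span_of_mem_lowerChains hD hn hbasis hmid i k
    (chain_mul_x_sub_mem hD hn k k.isLt)

lemma op_x_smul_basis_of_lt {k k' : Fin n} (h : k' < k) (i : ℕ) :
    op (x D (n - 1 - k) (by omega)) • bas (i, k') =
      x D (n - 1 - k) (by omega) • bas (i, k') := by
  have hmem : (x D (n - 1 - k) (by omega) : Module.End ℤ _) ∈ NHalg' n D :=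
    Algebra.subset_adjoin (Or.inl ⟨n - 1 - k, by omega, rfl⟩)
  have hcomm : Commute (x D (n - 1 - k) (by omega))
      (x D (n - 1) (Nat.sub_one_lt_of_lt hn) ^ i * chain D k') :=
    ((commute_x_x _ _).pow_right i).mul_right (commute_x_chain hD hn _ (by omega))
  rw [hbasis, smul_op_smul_of_smul_eq_op_smul (hmid _ hmem), hcomm.eq, smul_smul, ← op_mul]

end Bimodule

end NHalg

theorem stmt19 (n : ℕ) (hn : 2 ≤ n)
    (D : ∀ i, i + 1 < n → Module.End ℤ (MvPolynomial (Fin n) ℤ))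
    (hD : ∀ i hi, IsDD n i hi (D i hi))
    (N : Type) [AddCommGroup N]
    [Module (NHalg n D) N] [Module (NHalg n D)ᵐᵒᵖ N]
    [SMulCommClass (NHalg n D) (NHalg n D)ᵐᵒᵖ N]
    (bas : Module.Basis (ℕ × Fin n) (NHalg n D) N)
    (hbas : ∀ (i : ℕ) (k : Fin n) (t : NHalg n D),
      (t : Module.End ℤ (MvPolynomial (Fin n) ℤ)) =
          Xmul n (n - 1) (by omega) ^ i * chainD n D k →
      bas (i, k) = MulOpposite.op t • bas (0, ⟨0, by omega⟩))
    (hmid : ∀ a : NHalg n D,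
      (a : Module.End ℤ (MvPolynomial (Fin n) ℤ)) ∈ NHalg' n D →
      a • bas (0, ⟨0, by omega⟩) = MulOpposite.op a • bas (0, ⟨0, by omega⟩))
    (c : N) (hc : ∀ a : NHalg n D, a • c = MulOpposite.op a • c) :
    c = 0 := by
  have := SMulCommClass.symm (NHalg n D) (NHalg n D)ᵐᵒᵖ N
  have hbasis : ∀ i (k : Fin n),
      bas (i, k) =
        op (NHalg.x D (n - 1) (by omega) ^ i * NHalg.chain D k) • bas (0, ⟨0, by omega⟩) :=
    fun i k => hbas i k _ rfl
  refine bas.repr.map_eq_zero_iff.1 (Finsupp.ext fun ⟨i, k⟩ => ?_)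
  induction k using WellFoundedGT.induction generalizing i with | _ k ih
  let g := NHalg.x D (n - 1 - k) (by omega)
  refine bas.repr_column_eq_zero (DistribSMul.toLinearMap _ N (op g)) g
    (fun i => NHalg.op_x_smul_basis_sub_mem hD hn hbasis hmid i k) (fun p hp => ?_)
    (fun p hp => ih p.2 hp p.1) (hc g) i
  rw [DistribSMul.toLinearMap_apply, NHalg.op_x_smul_basis_of_lt hD hn hbasis hmid hp]
  exact smul_mem _ _ (subset_span ⟨p, hp, rfl⟩)
end
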